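/- The q-deformed W(2,2) Hom-Lie algebra (W^q, [·,·], α) with basis {L_n, W_n : n ∈ ℤ}, brackets [L_m, L_n] = [m-n] L_{m+n}, [L_m, W_n] = [m-n] W_{m+n}, [W_m, W_n] = 0, and twisting map α(L_n) = (q^n + q^{-n}) L_n, α(W_n) = (q^n + q^{-n}) W_n, is multiplicative if and only if q² = -1. -/

import Mathlib

/-!
Write `t n = q ^ n + q ^ (-n)` for the eigenvalue of `α` on `L_n` and `W_n`. Since
`t m * t n = t (m + n) + t (m - n)`, multiplicativity on the pair `(L_m, L_n)` (and likewise on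
`(L_m, W_n)`, `(W_m, L_n)`) amounts to `t (m - n) * [m - n] = 0`, so `α` is multiplicative iff
`t k * [k] = 0` for all `k`. For `k = 1` this is `q + q⁻¹ = 0`, i.e. `q ^ 2 = -1`; conversely, if
`q ^ 2 = -1` then `t k * (q ^ k - q ^ (-k)) = q ^ (2 * k) - q ^ (-2 * k) = (-1) ^ k - (-1) ^ k = 0`.
-/

section Multiplicative

variable {R ι M : Type*} [CommSemiring R] [AddCommMonoid M] [Module R M]

def IsMultiplicative (br : M →ₗ[R] M →ₗ[R] M) (α : M →ₗ[R] M) : Prop :=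
  ∀ x y, α (br x y) = br (α x) (α y)

theorem isMultiplicative_iff_basis (b : Module.Basis ι R M) (br : M →ₗ[R] M →ₗ[R] M)
    (α : M →ₗ[R] M) :
    IsMultiplicative br α ↔ ∀ i j, α (br (b i) (b j)) = br (α (b i)) (α (b j)) := by
  have h := LinearMap.ext_iff_basis b b (B := br.compr₂ α) (B' := (br.compl₂ α).comp α)
  simp only [LinearMap.compr₂_apply, LinearMap.compl₂_apply, LinearMap.comp_apply] at h
  rw [← h, LinearMap.ext_iff₂]
  rfl

end Multiplicative

theorem map_bracket_basis_eq_iff {K ι M : Type*} [Field K] [AddCommGroup M] [Module K M]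
    (b : Module.Basis ι K M) (br : M →ₗ[K] M →ₗ[K] M) (α : M →ₗ[K] M) {i j k : ι}
    {c s t u : K} (hbr : br (b i) (b j) = c • b k) (hi : α (b i) = s • b i)
    (hj : α (b j) = t • b j) (hk : α (b k) = u • b k) :
    α (br (b i) (b j)) = br (α (b i)) (α (b j)) ↔ c * u = s * t * c := by
  rw [hi, hj, map_smul, map_smul, LinearMap.smul_apply, hbr, map_smul, hk, smul_smul,
    smul_smul, smul_smul, mul_comm t s]
  exact (smul_left_injective K (b.ne_zero k)).eq_iff

theorem isMultiplicative_iff_forall_mul_eq_zero {K M : Type*} [Field K] [AddCommGroup M]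
    [Module K M] (b : Module.Basis (ℤ ⊕ ℤ) K M) (br : M →ₗ[K] M →ₗ[K] M) (α : M →ₗ[K] M)
    (c t : ℤ → K) (ht : ∀ m n, t m * t n = t (m + n) + t (m - n))
    (hLL : ∀ m n : ℤ, br (b (Sum.inl m)) (b (Sum.inl n)) = c (m - n) • b (Sum.inl (m + n)))
    (hLW : ∀ m n : ℤ, br (b (Sum.inl m)) (b (Sum.inr n)) = c (m - n) • b (Sum.inr (m + n)))
    (hWL : ∀ m n : ℤ, br (b (Sum.inr m)) (b (Sum.inl n)) = c (m - n) • b (Sum.inr (m + n)))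
    (hWW : ∀ m n : ℤ, br (b (Sum.inr m)) (b (Sum.inr n)) = 0)
    (hαL : ∀ n : ℤ, α (b (Sum.inl n)) = t n • b (Sum.inl n))
    (hαW : ∀ n : ℤ, α (b (Sum.inr n)) = t n • b (Sum.inr n)) :
    IsMultiplicative br α ↔ ∀ k, t k * c k = 0 := by
  have key : ∀ m n, c (m - n) * t (m + n) = t m * t n * c (m - n) ↔ t (m - n) * c (m - n) = 0 :=
    fun m n ↦ by rw [ht]; constructor <;> intro h <;> linear_combination -h
  rw [isMultiplicative_iff_basis b]
  constructor
  · intro h k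
    simpa using (key k 0).1
      ((map_bracket_basis_eq_iff b br α (hLL k 0) (hαL k) (hαL 0) (hαL _)).1 (h _ _))
  · rintro h (m | m) (n | n)
    · exact (map_bracket_basis_eq_iff b br α (hLL m n) (hαL m) (hαL n) (hαL _)).2
        ((key m n).2 (h _))
    · exact (map_bracket_basis_eq_iff b br α (hLW m n) (hαL m) (hαW n) (hαW _)).2
        ((key m n).2 (h _))
    · exact (map_bracket_basis_eq_iff b br α (hWL m n) (hαW m) (hαL n) (hαW _)).2
        ((key m n).2 (h _))
    · rw [hWW, hαW, hαW, map_smul, map_smul, LinearMap.smul_apply, hWW, map_zero, smul_zero,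
        smul_zero]

section QNumbers

variable {K : Type*} [Field K] {q : K}

open Classical in
noncomputable def qInt (q : K) (n : ℤ) : K :=
  if q = 1 then (n : K)
  else if q = -1 then (-1 : K) ^ (n - 1) * (n : K)
  else (q ^ n - q ^ (-n)) / (q - q⁻¹)

def qTwist (q : K) (n : ℤ) : K := q ^ n + q ^ (-n)

theorem qTwist_mul_qTwist (hq : q ≠ 0) (m n : ℤ) :
    qTwist q m * qTwist q n = qTwist q (m + n) + qTwist q (m - n) := by
  simp only [qTwist, zpow_neg, zpow_add₀ hq, zpow_sub₀ hq, mul_inv, div_eq_mul_inv, inv_inv]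
  ring

theorem sub_inv_ne_zero (hq : q ≠ 0) (h1 : q ≠ 1) (h2 : q ≠ -1) : q - q⁻¹ ≠ 0 := by
  intro h
  have hsq : q * q = 1 := by
    rw [sub_eq_zero] at h
    nth_rw 2 [h]
    exact mul_inv_cancel₀ hq
  exact (mul_self_eq_one_iff.1 hsq).elim h1 h2

theorem qInt_one (hq : q ≠ 0) : qInt q 1 = 1 := by
  unfold qInt
  split_ifs with h1 h2
  · simp
  · simp
  · rw [zpow_one, zpow_neg_one]
    exact div_self (sub_inv_ne_zero hq h1 h2)

theorem qTwist_mul_qInt_of_sq_eq_neg_one [CharZero K] (hq2 : q ^ 2 = -1) (k : ℤ) :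
    qTwist q k * qInt q k = 0 := by
  have h1 : q ≠ 1 := by rintro rfl; norm_num at hq2
  have h2 : q ≠ -1 := by rintro rfl; norm_num at hq2
  have hsq : ∀ n : ℤ, (q ^ n) ^ 2 = (-1) ^ n := fun n ↦ by
    rw [← zpow_natCast, ← zpow_mul, mul_comm, zpow_mul, zpow_natCast, hq2]
  have hsq_eq : (q ^ k) ^ 2 = (q ^ (-k)) ^ 2 := by
    rw [hsq, hsq, ← inv_zpow', inv_neg_one]
  rw [qInt, if_neg h1, if_neg h2, qTwist, mul_div_assoc', ← sq_sub_sq, hsq_eq, sub_self, zero_div]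

theorem forall_qTwist_mul_qInt_eq_zero_iff [CharZero K] (hq : q ≠ 0) :
    (∀ k, qTwist q k * qInt q k = 0) ↔ q ^ 2 = -1 := by
  refine ⟨fun h ↦ ?_, qTwist_mul_qInt_of_sq_eq_neg_one⟩
  have h1 := h 1
  rw [qInt_one hq, mul_one, qTwist, zpow_one, zpow_neg_one] at h1
  linear_combination q * h1 - mul_inv_cancel₀ hq

end QNumbers

open Classical in
/-- The q-deformed W(2,2) Hom-Lie algebra is multiplicative if and only if q² = -1. -/
theorem qW22_multiplicative_iff {K M : Type*} [Field K] [CharZero K]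
    [AddCommGroup M] [Module K M]
    (q : K) (hq : q ≠ 0) (b : Module.Basis (ℤ ⊕ ℤ) K M)
    (bn : ℤ → K)
    (hbn : ∀ n : ℤ, bn n =
      if q = 1 then (n : K)
      else if q = -1 then (-1 : K) ^ (n - 1) * (n : K)
      else (q ^ n - q ^ (-n)) / (q - q⁻¹))
    (br : M →ₗ[K] M →ₗ[K] M)
    (hLL : ∀ m n : ℤ, br (b (Sum.inl m)) (b (Sum.inl n)) = bn (m - n) • b (Sum.inl (m + n)))
    (hLW : ∀ m n : ℤ, br (b (Sum.inl m)) (b (Sum.inr n)) = bn (m - n) • b (Sum.inr (m + n)))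
    (hWL : ∀ m n : ℤ, br (b (Sum.inr m)) (b (Sum.inl n)) = bn (m - n) • b (Sum.inr (m + n)))
    (hWW : ∀ m n : ℤ, br (b (Sum.inr m)) (b (Sum.inr n)) = 0)
    (α : M →ₗ[K] M)
    (hαL : ∀ n : ℤ, α (b (Sum.inl n)) = (q ^ n + q ^ (-n)) • b (Sum.inl n))
    (hαW : ∀ n : ℤ, α (b (Sum.inr n)) = (q ^ n + q ^ (-n)) • b (Sum.inr n)) :
    (∀ x y : M, α (br x y) = br (α x) (α y)) ↔ q ^ 2 = -1 := by
  obtain rfl : bn = qInt q := funext hbn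
  exact (isMultiplicative_iff_forall_mul_eq_zero b br α (qInt q) (qTwist q)
    (qTwist_mul_qTwist hq) hLL hLW hWL hWW hαL hαW).trans
    (forall_qTwist_mul_qInt_eq_zero_iff hq)
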